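/- arXiv:2410.03279 — 5 statements merged into one kernel-verified Lean document; each statement's English description precedes it below -/
import Mathlib

section
/- Let k ∈ ℕ be even with k ≥ 4. Then the function f : ℝ → ℝ given by f(t) = t^k log|t| for t ≠ 0 and f(0) = 0 is not analytic at 0. -/
/-!
If `t ^ k * log |t|` were analytic at `0`, then `log = t⁻ᵏ · (t ^ k * log |t|)` would be
meromorphic there. It is not: `log t → -∞` forces its order to be negative, while
`t * log t → 0` forces `1 + ord log > 0`, and no integer lies strictly between `-1` and `0`.
-/

open Filter Topology

theorem Real.not_meromorphicAt_log_zero : ¬ MeromorphicAt Real.log 0 := by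
  intro hlog
  have hneg : meromorphicOrderAt Real.log 0 < 0 :=
    (tendsto_cobounded_iff_meromorphicOrderAt_neg hlog).mp
      (tendsto_log_nhdsNE_zero.mono_right IsOrderBornology.atBot_le_cobounded)
  have hmul_pos : 0 < meromorphicOrderAt (id * Real.log) 0 := by
    refine (tendsto_zero_iff_meromorphicOrderAt_pos ((MeromorphicAt.id 0).mul hlog)).mp ?_
    simpa [Pi.mul_def] using
      (continuous_mul_log.continuousAt (x := 0)).continuousWithinAt.tendsto
  rw [meromorphicOrderAt_mul (MeromorphicAt.id 0) hlog, meromorphicOrderAt_id] at hmul_pos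
  obtain ⟨n, hn⟩ := WithTop.ne_top_iff_exists.mp hneg.ne_top
  rw [← hn] at hneg hmul_pos
  norm_cast at hneg hmul_pos
  omega

theorem pow_mul_log_abs_not_analyticAt_zero_general (k : ℕ) :
    ¬ AnalyticAt ℝ (fun t : ℝ => t ^ k * Real.log |t|) 0 := by
  intro h
  have hlog : Real.log = (id ^ k)⁻¹ * fun t : ℝ => t ^ k * Real.log |t| := by
    funext t
    rcases eq_or_ne (t ^ k) 0 with ht | ht
    · obtain rfl : t = 0 := (pow_eq_zero_iff'.mp ht).1
      simp
    · simp [ht, Real.log_abs]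
  exact Real.not_meromorphicAt_log_zero <|
    hlog ▸ ((MeromorphicAt.id 0).pow k).inv.mul h.meromorphicAt

/-- For `k` even with `k ≥ 4`, the function `t ↦ t^k log|t|`
(with value `0` at `t = 0`, which is automatic since `Real.log 0 = 0`)
is not (real) analytic at `0`. -/
theorem pow_mul_log_abs_not_analyticAt_zero (k : ℕ) (hk : Even k) (hk4 : 4 ≤ k) :
    ¬ AnalyticAt ℝ (fun t : ℝ => t ^ k * Real.log |t|) 0 :=
  pow_mul_log_abs_not_analyticAt_zero_general k
end

section
/- Let k ∈ ℕ be even with k ≥ 4. Then the function f : ℝ → ℝ given by f(t) = t·|t|^{k−2}·(k log|t| + 1) for t ≠ 0 and f(0) = 0 is not analytic at 0. -/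
/-!
For even `k` we have `t * |t| ^ (k - 2) = t ^ (k - 1)`, so the function equals
`t ^ (k - 1) + k * t ^ (k - 1) * log t`, and analyticity at `0` would make `t ^ (k - 1) * log t`
analytic there, hence `log` meromorphic at `0`. But `log` tends to `-∞` at `0`, which forces a
negative order, while `t * log t → 0` forces `1 + order > 0`.
-/

open Filter Real Topology

theorem Even.mul_abs_pow_sub_two {R : Type*} [Ring R] [LinearOrder R] [IsOrderedRing R]
    {k : ℕ} (hk : Even k) (hk0 : k ≠ 0) (t : R) : t * |t| ^ (k - 2) = t ^ (k - 1) := by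
  have hk2 : k - 1 = k - 2 + 1 := by
    obtain ⟨j, rfl⟩ := hk
    omega
  rw [(hk.tsub even_two).pow_abs, hk2, pow_succ']

theorem Real.not_meromorphicAt_log_zero_s11 : ¬ MeromorphicAt log 0 := by
  intro hlog
  have hneg : meromorphicOrderAt log 0 < 0 :=
    (tendsto_cobounded_iff_meromorphicOrderAt_neg hlog).1
      (tendsto_log_nhdsNE_zero.mono_right IsOrderBornology.atBot_le_cobounded)
  have hpos : 0 < meromorphicOrderAt (id * log) 0 :=
    (tendsto_zero_iff_meromorphicOrderAt_pos (analyticAt_id.meromorphicAt.mul hlog)).1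
      ((continuous_mul_log.tendsto' 0 0 (by simp)).mono_left nhdsWithin_le_nhds)
  rw [meromorphicOrderAt_mul analyticAt_id.meromorphicAt hlog, meromorphicOrderAt_id] at hpos
  cases h : meromorphicOrderAt log 0 with
  | top => simp [h] at hneg
  | coe n =>
    rw [h] at hpos hneg
    norm_cast at hpos hneg
    omega

theorem Real.not_analyticAt_pow_mul_log_zero (m : ℕ) :
    ¬ AnalyticAt ℝ (fun t => t ^ m * log t) 0 := by
  intro h
  have hpow : AnalyticAt ℝ (fun t : ℝ => t ^ m) 0 := by fun_prop
  refine not_meromorphicAt_log_zero_s11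
    ((hpow.meromorphicAt.fun_inv.fun_mul h.meromorphicAt).congr ?_)
  filter_upwards [self_mem_nhdsWithin] with t ht
  field_simp [pow_ne_zero m ht]

/-- For `k` even with `k ≥ 4`, the function
`t ↦ t·|t|^(k-2)·(k log|t| + 1)` (with value `0` at `t = 0`, automatic since the
first factor vanishes) is not (real) analytic at `0`. -/
theorem tps_normal_restriction_not_analyticAt_zero (k : ℕ) (hk : Even k) (hk4 : 4 ≤ k) :
    ¬ AnalyticAt ℝ (fun t : ℝ => t * |t| ^ (k - 2) * ((k : ℝ) * Real.log |t| + 1)) 0 := by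
  intro hf
  have hk0 : (k : ℝ) ≠ 0 := Nat.cast_ne_zero.2 (by omega)
  have hsplit : (fun t : ℝ => t * |t| ^ (k - 2) * ((k : ℝ) * Real.log |t| + 1))
      = fun t => t ^ (k - 1) + k * (t ^ (k - 1) * log t) := by
    funext t
    rw [hk.mul_abs_pow_sub_two (by omega), log_abs]
    ring
  rw [hsplit] at hf
  have hpow : AnalyticAt ℝ (fun t : ℝ => t ^ (k - 1)) 0 := by fun_prop
  apply not_analyticAt_pow_mul_log_zero (k - 1)
  convert (hf.fun_sub hpow).fun_const_smul (c := (k⁻¹ : ℝ)) using 2 with t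
  simp only [smul_eq_mul, add_sub_cancel_left, inv_mul_cancel_left₀ hk0]
end

section
/- Let d ≥ 1, let U ⊆ ℝ^d be a nonempty open connected set, and let f : ℝ^d → ℝ be analytic at every point of U. If f is not identically zero on U, then the zero set {x ∈ U : f(x) = 0} has d-dimensional Lebesgue measure zero. -/
/-!
Near any point of `U`, an analytic function that is not identically zero on the connected set `U`
is not identically zero on any small box `I × V`, so it suffices to treat boxes. There we slice
by Fubini: choose `(a, b)` in the box with `f (a, b) ≠ 0`. By induction on the dimension, for
almost every `t ∈ I` we have `f (t, b) ≠ 0`; for each such `t` the slice `f (t, ·)` is not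
identically zero on `V`, so its zero set in `V` is null, again by induction. The one-dimensional
case holds because the zeros of a nonzero analytic function on an interval are isolated.
-/

open MeasureTheory Filter Set Metric
open scoped Topology

section

variable {E E₁ E₂ : Type*}

theorem measurableSet_setOf_mem_and_eq [TopologicalSpace E] [MeasurableSpace E]
    [OpensMeasurableSpace E] {β : Type*} [TopologicalSpace β] [T1Space β] {F : E → β}
    {U : Set E} (hU : IsOpen U) (hF : ContinuousOn F U) (b : β) :
    MeasurableSet {x ∈ U | F x = b} := by
  have hopen : IsOpen (U ∩ F ⁻¹' {b}ᶜ) := hF.isOpen_inter_preimage hU isOpen_compl_singleton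
  have heq : {x ∈ U | F x = b} = U \ (U ∩ F ⁻¹' {b}ᶜ) := by ext x; simp
  rw [heq]
  exact hU.measurableSet.diff hopen.measurableSet

theorem AnalyticOnNhd.exists_ne_zero_of_mem_nhds {𝕜 G : Type*} [NontriviallyNormedField 𝕜]
    [NormedAddCommGroup E] [NormedSpace 𝕜 E] [NormedAddCommGroup G] [NormedSpace 𝕜 G]
    {F : E → G} {U s : Set E} {x : E} (hF : AnalyticOnNhd 𝕜 F U) (hU : IsPreconnected U)
    (hne : ∃ y ∈ U, F y ≠ 0) (hx : x ∈ U) (hs : s ∈ 𝓝 x) : ∃ y ∈ s, F y ≠ 0 := by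
  by_contra! hzero
  obtain ⟨y, hy, hFy⟩ := hne
  exact hFy (hF.eqOn_zero_of_preconnected_of_eventuallyEq_zero hU hx
    (eventually_of_mem hs hzero) hy)

variable [NormedAddCommGroup E] [NormedSpace ℝ E] [MeasurableSpace E]

def AnalyticZeroSetsNull (μ : Measure E) : Prop :=
  ∀ ⦃F : E → ℝ⦄ ⦃U : Set E⦄, IsOpen U → IsPreconnected U → AnalyticOnNhd ℝ F U →
    (∃ x ∈ U, F x ≠ 0) → μ {x ∈ U | F x = 0} = 0

theorem AnalyticZeroSetsNull.of_subsingleton [Subsingleton E] (μ : Measure E) :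
    AnalyticZeroSetsNull μ := by
  rintro F U - - - ⟨x, -, hFx⟩
  convert measure_empty (μ := μ)
  refine eq_empty_of_forall_notMem fun y hy => hFx ?_
  rw [Subsingleton.elim x y]
  exact hy.2

theorem analyticZeroSetsNull_real (μ : Measure ℝ) [NullSingletonClass μ] :
    AnalyticZeroSetsNull μ := by
  rintro F U hU hUc hF ⟨x, hx, hFx⟩
  have hcodiscrete : ∀ᶠ t in codiscreteWithin U, F t ≠ 0 :=
    (hF.eqOn_zero_or_eventually_ne_zero_of_preconnected hUc).resolve_left fun h => hFx (h hx)
  have hae : ∀ᵐ t ∂μ.restrict U, F t ≠ 0 :=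
    ae_restrict_le_codiscreteWithin hU.measurableSet hcodiscrete
  rw [ae_iff, Measure.restrict_apply' hU.measurableSet] at hae
  convert hae using 2
  ext t
  simp [and_comm]

variable {E' : Type*} [NormedAddCommGroup E'] [NormedSpace ℝ E']
  [MeasurableSpace E'] [BorelSpace E']

theorem AnalyticZeroSetsNull.of_measurePreserving {μ : Measure E} {μ' : Measure E'}
    (hμ : AnalyticZeroSetsNull μ) (e : E ≃L[ℝ] E') (he : MeasurePreserving e μ μ') :
    AnalyticZeroSetsNull μ' := by
  rintro F U hU hUc hF ⟨x, hx, hFx⟩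
  have hZ := measurableSet_setOf_mem_and_eq hU hF.continuousOn 0
  rw [← he.measure_preimage hZ.nullMeasurableSet]
  refine hμ (hU.preimage e.continuous) (e.toHomeomorph.isPreconnected_preimage.2 hUc)
    (fun y hy => (hF _ hy).comp (e.analyticAt y))
    ⟨e.symm x, show e (e.symm x) ∈ U by rwa [e.apply_symm_apply], by simpa using hFx⟩

variable [NormedAddCommGroup E₁] [NormedSpace ℝ E₁] [MeasurableSpace E₁] [BorelSpace E₁]
  [NormedAddCommGroup E₂] [NormedSpace ℝ E₂] [MeasurableSpace E₂]
  [BorelSpace E₂] [SecondCountableTopology E₂] {ν : Measure E₁} {μ : Measure E₂} [SFinite μ]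

theorem AnalyticZeroSetsNull.prod_box (hν : AnalyticZeroSetsNull ν) (hμ : AnalyticZeroSetsNull μ)
    {F : E₁ × E₂ → ℝ} {I : Set E₁} {V : Set E₂} (hI : IsOpen I) (hIc : IsPreconnected I)
    (hV : IsOpen V) (hVc : IsPreconnected V) (hF : AnalyticOnNhd ℝ F (I ×ˢ V))
    (hne : ∃ p ∈ I ×ˢ V, F p ≠ 0) :
    ν.prod μ {p ∈ I ×ˢ V | F p = 0} = 0 := by
  obtain ⟨⟨a, b⟩, ⟨ha, hb⟩, hFab⟩ := hne
  have hZ := measurableSet_setOf_mem_and_eq (hI.prod hV) hF.continuousOn 0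
  rw [Measure.measure_prod_null hZ]
  have hfiber : ∀ᵐ t ∂ν, t ∉ {t ∈ I | F (t, b) = 0} :=
    measure_eq_zero_iff_ae_notMem.1 <| hν hI hIc
      (fun t ht => (hF (t, b) ⟨ht, hb⟩).curry_left) ⟨a, ha, hFab⟩
  filter_upwards [hfiber] with t ht
  rw [Pi.zero_apply]
  by_cases htI : t ∈ I
  · have hslice : μ {y ∈ V | F (t, y) = 0} = 0 :=
      hμ hV hVc (fun y hy => (hF (t, y) ⟨htI, hy⟩).curry_right)
        ⟨b, hb, fun h => ht ⟨htI, h⟩⟩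
    refine measure_mono_null (fun y hy => ?_) hslice
    exact ⟨hy.1.2, hy.2⟩
  · convert measure_empty (μ := μ)
    exact eq_empty_of_forall_notMem fun y hy => htI hy.1.1

theorem AnalyticZeroSetsNull.prod [SecondCountableTopology E₁] (hν : AnalyticZeroSetsNull ν)
    (hμ : AnalyticZeroSetsNull μ) :
    AnalyticZeroSetsNull (ν.prod μ) := by
  intro F U hU hUc hF hne
  refine measure_null_of_locally_null _ fun x hx => ?_
  obtain ⟨ε, hε, hball⟩ := isOpen_iff.1 hU x hx.1
  rw [← ball_prod_same] at hball
  set B := ball x.1 ε ×ˢ ball x.2 ε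
  have hBo : IsOpen B := isOpen_ball.prod isOpen_ball
  have hxB : x ∈ B := ⟨mem_ball_self hε, mem_ball_self hε⟩
  refine ⟨{p ∈ B | F p = 0}, mem_nhdsWithin.2 ⟨B, hBo, hxB, fun p ⟨hpB, hpZ⟩ => ⟨hpB, hpZ.2⟩⟩, ?_⟩
  obtain ⟨p, hpB, hFp⟩ := hF.exists_ne_zero_of_mem_nhds hUc hne hx.1 (hBo.mem_nhds hxB)
  exact hν.prod_box hμ isOpen_ball (convex_ball _ _).isPreconnected isOpen_ball
    (convex_ball _ _).isPreconnected (hF.mono hball) ⟨p, hpB, hFp⟩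

end

theorem volume_preserving_consEquivL (n : ℕ) :
    MeasurePreserving (Fin.consEquivL ℝ fun _ : Fin (n + 1) => ℝ) (volume.prod volume) volume := by
  have h : ⇑(Fin.consEquivL ℝ fun _ : Fin (n + 1) => ℝ) =
      (MeasurableEquiv.piFinSuccAbove (fun _ => ℝ) 0).symm := by
    funext p i
    simp [MeasurableEquiv.piFinSuccAbove, Fin.consEquivL, Fin.consLinearEquiv]
  rw [h, ← Measure.volume_eq_prod]
  exact (volume_preserving_piFinSuccAbove (fun _ => ℝ) 0).symm

theorem analyticZeroSetsNull_volume_pi (n : ℕ) :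
    AnalyticZeroSetsNull (volume : Measure (Fin n → ℝ)) := by
  induction n with
  | zero => exact .of_subsingleton _
  | succ n ih =>
    exact ((analyticZeroSetsNull_real volume).prod ih).of_measurePreserving _
      (volume_preserving_consEquivL n)

theorem zero_set_of_analytic_measure_zero_general (d : ℕ)
    (U : Set (EuclideanSpace ℝ (Fin d))) (hUo : IsOpen U) (hUc : IsConnected U)
    (f : EuclideanSpace ℝ (Fin d) → ℝ) (hf : ∀ x ∈ U, AnalyticAt ℝ f x)
    (hne : ∃ x ∈ U, f x ≠ 0) :
    volume {x ∈ U | f x = 0} = 0 :=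
  ((analyticZeroSetsNull_volume_pi d).of_measurePreserving (EuclideanSpace.equiv (Fin d) ℝ).symm
    (PiLp.volume_preserving_toLp _)) hUo hUc.isPreconnected hf hne

/-- Let `U ⊆ ℝ^d` (`d ≥ 1`) be a nonempty open connected set and let
`f : ℝ^d → ℝ` be analytic at every point of `U`. If `f` is not identically zero on `U`,
then the zero set `{x ∈ U : f x = 0}` has Lebesgue measure zero. -/
theorem zero_set_of_analytic_measure_zero (d : ℕ) (hd : 1 ≤ d)
    (U : Set (EuclideanSpace ℝ (Fin d))) (hUo : IsOpen U) (hUc : IsConnected U)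
    (f : EuclideanSpace ℝ (Fin d) → ℝ) (hf : ∀ x ∈ U, AnalyticAt ℝ f x)
    (hne : ∃ x ∈ U, f x ≠ 0) :
    volume {x ∈ U | f x = 0} = 0 :=
  zero_set_of_analytic_measure_zero_general d U hUo hUc f hf hne
end

section
/- Let d ≥ 2, let c_{ij} ∈ ℝ (1 ≤ i,j ≤ d) satisfy the ellipticity condition Σ_{i,j} c_{ij} ξ_i ξ_j ≠ 0 for every ξ ∈ ℝ^d \ {0}, let b ∈ ℝ^d, ρ ∈ ℝ, P ∈ ℝ^d, and let k ∈ ℕ be odd with k > 2. Define g : ℝ^d → ℝ by g(A) = Σ_{i,j} c_{ij} ∂²_{a_i a_j}[‖P−A‖^k] + Σ_j b_j ∂_{a_j}[‖P−A‖^k] + ρ ‖P−A‖^k for A ≠ P (derivatives in the A variable), and g(P) = 0. Then g is not analytic at A = P. -/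
/-!
Along the line `t ↦ P + t • e₁` the operator applied to `‖P - A‖ ^ k` equals `|t| ^ (k - 2) * r t`
with `r` a quadratic polynomial and `r 0 = k * ((k - 2) * c₁₁ + ∑ i, c i i)`. Ellipticity forces
all diagonal entries `c i i` to have one sign (the quadratic form cannot change sign on the segment
from `eᵢ` to `eⱼ`), so `r 0 ≠ 0`. Since `k - 2` is odd, an analytic function equal to
`t ^ (k - 2) * r t` for `t > 0` and to `-(t ^ (k - 2) * r t)` for `t < 0` would, by the identity
theorem, make `t ^ (k - 2) * r t` vanish near `0`, which it does not.
-/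

open Filter Topology
open scoped RealInnerProductSpace

theorem mul_pos_of_ne_zero_on_segment {E : Type*} [AddCommGroup E] [Module ℝ E]
    [TopologicalSpace E] [IsTopologicalAddGroup E] [ContinuousSMul ℝ E]
    {f : E → ℝ} {u v : E} (hf : ContinuousOn f (segment ℝ u v))
    (h : ∀ x ∈ segment ℝ u v, f x ≠ 0) : 0 < f u * f v := by
  by_contra! hle
  have hconn := (convex_segment u v).isPreconnected
  obtain ⟨x, hx, hfx⟩ : ∃ x ∈ segment ℝ u v, f x = 0 := by
    rcases le_total (f u) (f v) with huv | hvu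
    · exact hconn.intermediate_value (left_mem_segment ℝ u v) (right_mem_segment ℝ u v) hf
        ⟨by nlinarith, by nlinarith⟩
    · exact hconn.intermediate_value (right_mem_segment ℝ u v) (left_mem_segment ℝ u v) hf
        ⟨by nlinarith, by nlinarith⟩
  exact h x hx hfx

theorem diag_mul_diag_pos {d : ℕ} {c : Fin d → Fin d → ℝ}
    (hell : ∀ ξ : Fin d → ℝ, ξ ≠ 0 → (∑ i, ∑ j, c i j * ξ i * ξ j) ≠ 0) (i j : Fin d) :
    0 < c i i * c j j := by
  have hq (m : Fin d) :
      (∑ i, ∑ j, c i j * (Pi.single m 1 : Fin d → ℝ) i * (Pi.single m 1 : Fin d → ℝ) j) =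
        c m m := by
    simp [Pi.single_apply]
  rw [← hq i, ← hq j]
  refine mul_pos_of_ne_zero_on_segment
    (f := fun ξ : Fin d → ℝ => ∑ i, ∑ j, c i j * ξ i * ξ j) (by fun_prop) fun ξ hξ => hell ξ ?_
  -- the coordinate sum is `1` at both ends of the segment, hence on all of it
  obtain ⟨a, b, -, -, hab, rfl⟩ := hξ
  intro h0
  have := congrArg (fun ξ : Fin d → ℝ => ∑ l, ξ l) h0
  simp [Finset.sum_add_distrib, ← Finset.mul_sum, hab] at this

theorem mul_diag_add_sum_diag_ne_zero {d : ℕ} {c : Fin d → Fin d → ℝ}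
    (hell : ∀ ξ : Fin d → ℝ, ξ ≠ 0 → (∑ i, ∑ j, c i j * ξ i * ξ j) ≠ 0) {a : ℝ} (ha : 0 ≤ a)
    (i₀ : Fin d) : a * c i₀ i₀ + ∑ i, c i i ≠ 0 := by
  have hdiag : 0 ≤ c i₀ i₀ * (a * c i₀ i₀) := by
    rw [mul_left_comm]
    exact mul_nonneg ha (diag_mul_diag_pos hell i₀ i₀).le
  have htrace : 0 < ∑ i, c i₀ i₀ * c i i :=
    Finset.sum_pos (fun i _ => diag_mul_diag_pos hell i₀ i) ⟨i₀, Finset.mem_univ i₀⟩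
  have hpos : 0 < c i₀ i₀ * (a * c i₀ i₀ + ∑ i, c i i) := by
    rw [mul_add, Finset.mul_sum]
    linarith
  exact right_ne_zero_of_mul hpos.ne'

section RadialPower

variable {E : Type*} [NormedAddCommGroup E] [InnerProductSpace ℝ E]

theorem hasFDerivAt_norm_rpow_of_ne_zero {x : E} (hx : x ≠ 0) (p : ℝ) :
    HasFDerivAt (fun x : E ↦ ‖x‖ ^ p) ((p * ‖x‖ ^ (p - 2)) • innerSL ℝ x) x := by
  apply HasStrictFDerivAt.hasFDerivAt
  convert (hasStrictFDerivAt_norm_sq x).rpow_const (p := p / 2) (by simp [hx]) using 0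
  simp_rw [← Real.rpow_natCast_mul (norm_nonneg _), ← Nat.cast_smul_eq_nsmul ℝ, smul_smul]
  ring_nf

theorem hasFDerivAt_norm_sub_rpow {P A : E} (h : A ≠ P) (p : ℝ) :
    HasFDerivAt (fun B : E ↦ ‖P - B‖ ^ p) (-(p * ‖P - A‖ ^ (p - 2)) • innerSL ℝ (P - A)) A := by
  refine ((hasFDerivAt_norm_rpow_of_ne_zero (sub_ne_zero.2 h.symm) p).comp A
    ((hasFDerivAt_id A).const_sub P)).congr_fderiv ?_
  ext v
  simp

theorem fderiv_norm_sub_rpow_apply {P A : E} (h : A ≠ P) (p : ℝ) (v : E) :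
    fderiv ℝ (fun B : E ↦ ‖P - B‖ ^ p) A v = -(p * ‖P - A‖ ^ (p - 2)) * ⟪P - A, v⟫ := by
  simp [(hasFDerivAt_norm_sub_rpow h p).fderiv, inner_sub_left]

theorem fderiv_fderiv_norm_sub_rpow_apply {P A : E} (h : A ≠ P) (p : ℝ) (u v : E) :
    fderiv ℝ (fderiv ℝ fun B : E ↦ ‖P - B‖ ^ p) A u v =
      p * (p - 2) * ‖P - A‖ ^ (p - 4) * ⟪P - A, u⟫ * ⟪P - A, v⟫
        + p * ‖P - A‖ ^ (p - 2) * ⟪u, v⟫ := by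
  have hgrad : fderiv ℝ (fun B : E ↦ ‖P - B‖ ^ p) =ᶠ[𝓝 A]
      fun B ↦ (-(p * ‖P - B‖ ^ (p - 2))) • innerSL ℝ (P - B) := by
    filter_upwards [compl_singleton_mem_nhds h] with B hB
    exact (hasFDerivAt_norm_sub_rpow hB p).fderiv
  have hcoef : HasFDerivAt (fun B : E ↦ -(p * ‖P - B‖ ^ (p - 2))) _ A :=
    ((hasFDerivAt_norm_sub_rpow h (p - 2)).const_mul p).neg
  have hvec : HasFDerivAt (fun B : E ↦ innerSL ℝ (P - B)) _ A :=
    (innerSL ℝ).hasFDerivAt.comp A ((hasFDerivAt_id A).const_sub P)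
  have hF : HasFDerivAt (fun B : E ↦ -(p * ‖P - B‖ ^ (p - 2)) • innerSL ℝ (P - B)) _ A :=
    hcoef.smul hvec
  rw [hgrad.fderiv_eq, hF.fderiv, show p - 2 - 2 = p - 4 by ring]
  simp only [ContinuousLinearMap.comp_neg, ContinuousLinearMap.comp_id, smul_neg, neg_smul,
    neg_neg, add_apply, smul_apply, ContinuousLinearMap.smulRight_apply, coe_innerSL_apply,
    smul_eq_mul]
  rw [innerSL_apply_apply]
  ring

end RadialPower

section EllipticOperator

variable {d : ℕ}

noncomputable def ellipticOpRadialPower (c : Fin d → Fin d → ℝ) (b : Fin d → ℝ) (ρ : ℝ)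
    (P : EuclideanSpace ℝ (Fin d)) (k : ℕ) (A : EuclideanSpace ℝ (Fin d)) : ℝ :=
  (∑ i, ∑ j, c i j *
      iteratedFDeriv ℝ 2 (fun B : EuclideanSpace ℝ (Fin d) => ‖P - B‖ ^ k) A
        ![EuclideanSpace.single i 1, EuclideanSpace.single j 1]) +
    (∑ j, b j *
      fderiv ℝ (fun B : EuclideanSpace ℝ (Fin d) => ‖P - B‖ ^ k) A (EuclideanSpace.single j 1)) +
    ρ * ‖P - A‖ ^ k

theorem ellipticOpRadialPower_eq {c : Fin d → Fin d → ℝ} {b : Fin d → ℝ} {ρ : ℝ}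
    {P A : EuclideanSpace ℝ (Fin d)} (h : A ≠ P) (k : ℕ) :
    ellipticOpRadialPower c b ρ P k A =
      (∑ i, ∑ j, c i j * (k * (k - 2) * ‖P - A‖ ^ ((k : ℝ) - 4) * (P - A) i * (P - A) j
          + k * ‖P - A‖ ^ ((k : ℝ) - 2) * if i = j then 1 else 0))
        + (∑ j, b j * (-(k * ‖P - A‖ ^ ((k : ℝ) - 2)) * (P - A) j)) + ρ * ‖P - A‖ ^ k := by
  have hpow : (fun B : EuclideanSpace ℝ (Fin d) => ‖P - B‖ ^ k) = fun B => ‖P - B‖ ^ (k : ℝ) :=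
    funext fun B => (Real.rpow_natCast _ k).symm
  simp only [ellipticOpRadialPower, hpow, iteratedFDeriv_two_apply, Matrix.cons_val_zero,
    Matrix.cons_val_one, fderiv_fderiv_norm_sub_rpow_apply h, fderiv_norm_sub_rpow_apply h,
    EuclideanSpace.inner_single_right, one_mul, conj_trivial, PiLp.single_apply, eq_comm]

theorem ellipticOpRadialPower_add_smul_single {c : Fin d → Fin d → ℝ} {b : Fin d → ℝ} {ρ : ℝ}
    (P : EuclideanSpace ℝ (Fin d)) (i₀ : Fin d) {k : ℕ} (hk : 2 ≤ k) {t : ℝ} (ht : t ≠ 0) :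
    ellipticOpRadialPower c b ρ P k (P + t • EuclideanSpace.single i₀ 1) =
      |t| ^ (k - 2) * (k * ((k - 2) * c i₀ i₀ + ∑ i, c i i) + k * b i₀ * t + ρ * t ^ 2) := by
  have hw : P - (P + t • EuclideanSpace.single i₀ (1 : ℝ)) =
      (-t) • EuclideanSpace.single i₀ 1 := by
    rw [neg_smul]
    abel
  have hnorm : ‖(-t) • EuclideanSpace.single i₀ (1 : ℝ)‖ = |t| := by simp [norm_smul]
  have hcoord (i : Fin d) :
      ((-t) • EuclideanSpace.single i₀ (1 : ℝ)) i = if i = i₀ then -t else 0 := by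
    by_cases h : i = i₀ <;> simp [h]
  have habs : 0 < |t| := abs_pos.2 ht
  have h2 : |t| ^ ((k : ℝ) - 2) = |t| ^ (k - 2) := by
    rw [← Real.rpow_natCast, Nat.cast_sub hk, Nat.cast_ofNat]
  have h4 : |t| ^ ((k : ℝ) - 4) * t ^ 2 = |t| ^ (k - 2) := by
    rw [← h2, ← sq_abs, ← Real.rpow_two, ← Real.rpow_add habs]
    ring_nf
  have hk' : |t| ^ k = |t| ^ (k - 2) * t ^ 2 := by
    rw [← sq_abs, ← pow_add, Nat.sub_add_cancel hk]
  rw [ellipticOpRadialPower_eq (by simp [ht]), hw, hnorm]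
  simp only [hcoord, mul_add, Finset.sum_add_distrib, mul_ite, ite_mul, mul_zero, zero_mul,
    mul_one, Finset.sum_ite_eq', Finset.sum_ite_eq, Finset.mem_univ, if_true, ← Finset.sum_mul]
  linear_combination (k * (k - 2) * c i₀ i₀) * h4 + (k * ∑ i, c i i + k * b i₀ * t) * h2 + ρ * hk'

end EllipticOperator

theorem not_analyticAt_of_eq_abs_pow_mul {f r : ℝ → ℝ} {m : ℕ} (hm : Odd m)
    (hr : AnalyticAt ℝ r 0) (hr0 : r 0 ≠ 0) (hf : ∀ t ≠ 0, f t = |t| ^ m * r t) :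
    ¬ AnalyticAt ℝ f 0 := by
  intro hfa
  have hQ : AnalyticAt ℝ (fun t => t ^ m * r t) 0 := by fun_prop
  have hright : ∀ᶠ t in 𝓝 0, f t = t ^ m * r t := by
    refine (hfa.frequently_eq_iff_eventually_eq hQ).1 ?_
    refine Frequently.filter_mono ?_ (nhdsWithin_mono 0 fun t (ht : t ∈ Set.Ioi 0) => ht.ne')
    exact (eventually_nhdsWithin_of_forall fun t (ht : t ∈ Set.Ioi 0) => by
      rw [hf t ht.ne', abs_of_pos ht]).frequently
  have hleft : ∀ᶠ t in 𝓝 0, f t = -(t ^ m * r t) := by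
    refine (hfa.frequently_eq_iff_eventually_eq (g := fun t => -(t ^ m * r t)) hQ.neg).1 ?_
    refine Frequently.filter_mono ?_ (nhdsWithin_mono 0 fun t (ht : t ∈ Set.Iio 0) => ht.ne)
    exact (eventually_nhdsWithin_of_forall fun t (ht : t ∈ Set.Iio 0) => by
      rw [hf t ht.ne, abs_of_neg ht, hm.neg_pow, neg_mul]).frequently
  have hvanish : ∀ᶠ t in 𝓝[≠] 0, t ^ m * r t = 0 :=
    ((hright.and hleft).filter_mono nhdsWithin_le_nhds).mono fun t ⟨h₁, h₂⟩ => by linarith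
  have hnonvanish : ∀ᶠ t in 𝓝[≠] 0, t ^ m * r t ≠ 0 := by
    filter_upwards [self_mem_nhdsWithin,
      (hr.continuousAt.eventually_ne hr0).filter_mono nhdsWithin_le_nhds] with t ht hrt
    exact mul_ne_zero (pow_ne_zero m ht) hrt
  obtain ⟨t, h₁, h₂⟩ := (hvanish.and hnonvanish).exists
  exact h₂ h₁

open Classical in
/-- Let `d ≥ 2`, let constants `c_{ij}` satisfy the ellipticity condition,
`b ∈ ℝ^d`, `ρ ∈ ℝ`, `P ∈ ℝ^d`, and `k` odd with `k > 2`. The function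
`g(A) = Σ c_{ij} ∂²_{a_i a_j}‖P−A‖^k + Σ b_j ∂_{a_j}‖P−A‖^k + ρ‖P−A‖^k` for `A ≠ P`
(derivatives in the center variable `A`, second partials realized as the second iterated
Fréchet derivative on standard basis vectors), with `g(P) = 0`, is not analytic at `P`. -/
theorem elliptic_op_radial_power_not_analyticAt (d k : ℕ) (hd : 2 ≤ d)
    (hk : Odd k) (hk2 : 2 < k)
    (c : Fin d → Fin d → ℝ) (b : Fin d → ℝ) (ρ : ℝ)
    (hell : ∀ ξ : Fin d → ℝ, ξ ≠ 0 → (∑ i, ∑ j, c i j * ξ i * ξ j) ≠ 0)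
    (P : EuclideanSpace ℝ (Fin d)) :
    ¬ AnalyticAt ℝ
      (fun A : EuclideanSpace ℝ (Fin d) =>
        if A = P then (0 : ℝ)
        else
          (∑ i, ∑ j, c i j *
              iteratedFDeriv ℝ 2
                (fun B : EuclideanSpace ℝ (Fin d) => ‖P - B‖ ^ k) A
                ![EuclideanSpace.single i 1, EuclideanSpace.single j 1]) +
            (∑ j, b j *
              fderiv ℝ (fun B : EuclideanSpace ℝ (Fin d) => ‖P - B‖ ^ k) A
                (EuclideanSpace.single j 1)) +
            ρ * ‖P - A‖ ^ k) P := by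
  let i₀ : Fin d := ⟨0, by omega⟩
  let α : ℝ := k * ((k - 2) * c i₀ i₀ + ∑ i, c i i)
  have hα : α ≠ 0 := mul_ne_zero (by positivity)
    (mul_diag_add_sum_diag_ne_zero hell (by rw [sub_nonneg]; exact_mod_cast hk2.le) i₀)
  change ¬ AnalyticAt ℝ (fun A => if A = P then 0 else ellipticOpRadialPower c b ρ P k A) P
  intro hanalytic
  refine not_analyticAt_of_eq_abs_pow_mul (m := k - 2)
    (r := fun t => α + k * b i₀ * t + ρ * t ^ 2)
    (Nat.Odd.sub_even hk2.le hk even_two) (by fun_prop) (by simpa using hα) (fun t ht => ?_)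
    (hanalytic.comp_of_eq (f := fun t : ℝ => P + t • EuclideanSpace.single i₀ (1 : ℝ))
      (by fun_prop) (by simp))
  rw [Function.comp_apply, if_neg (by simp [ht])]
  exact ellipticOpRadialPower_add_smul_single P i₀ hk2.le ht
end

section
/- Let d ≥ 2, let c_{ij} ∈ ℝ (1 ≤ i,j ≤ d) satisfy the ellipticity condition Σ_{i,j} c_{ij} ξ_i ξ_j ≠ 0 for every ξ ∈ ℝ^d \ {0}, let b ∈ ℝ^d, ρ ∈ ℝ, P ∈ ℝ^d, and let k ∈ ℕ be even with k ≥ 4. Define g : ℝ^d → ℝ by g(A) = Σ_{i,j} c_{ij} ∂²_{a_i a_j}[‖P−A‖^k log‖P−A‖] + Σ_j b_j ∂_{a_j}[‖P−A‖^k log‖P−A‖] + ρ ‖P−A‖^k log‖P−A‖ for A ≠ P (derivatives in the A variable), and g(P) = 0. Then g is not analytic at A = P. -/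
/-!
Write `k = 2n + 4`. Along a ray `A = P - t • ξ` with `‖ξ‖ = 1` and `t > 0`, the radial
derivative formulas for `‖P - A‖ ^ k * log ‖P - A‖` show that `g(A)` is a polynomial in `t`
plus `t ^ (k - 2) * u(t) * log t`, where `u` is a polynomial with
`u 0 = k * ((k - 2) * ∑ c i j ξ i ξ j + ∑ c i i)`. An analytic function of `t` admits no such
logarithmic term unless `u 0 = 0`. Taking `ξ = e_l` gives `(k - 2) c l l + ∑ c i i = 0` for all
`l`; summing over `l` forces the trace and then each `c l l` to vanish, which contradicts
ellipticity at `ξ = e_l`.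
-/

open Real Filter Topology RealInnerProductSpace

lemma tendsto_pow_mul_log_nhdsGT_zero {j : ℕ} (hj : j ≠ 0) :
    Tendsto (fun t : ℝ => t ^ j * log t) (𝓝[>] 0) (𝓝 0) := by
  simpa [mul_comm] using tendsto_log_mul_rpow_nhdsGT_zero (r := j) (by positivity)

lemma eq_zero_of_analyticAt_of_eventually_eq_pow_mul_log {ψ u : ℝ → ℝ} {n : ℕ}
    (hψ : AnalyticAt ℝ ψ 0) (hu : ContinuousAt u 0)
    (h : ∀ᶠ t in 𝓝[>] 0, ψ t = t ^ n * u t * log t) : u 0 = 0 := by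
  have hu' : Tendsto u (𝓝[>] 0) (𝓝 (u 0)) := hu.tendsto.mono_left nhdsWithin_le_nhds
  have hunit : ∀ᶠ t in 𝓝[>] (0 : ℝ), t ∈ Set.Ioo 0 1 := Ioo_mem_nhdsGT one_pos
  have hlog_inv : Tendsto (fun t => (log t)⁻¹) (𝓝[>] 0) (𝓝 0) :=
    tendsto_log_nhdsGT_zero.inv_tendsto_atBot
  refine tendsto_nhds_unique hu' ?_
  by_cases hzero : ∀ᶠ t in 𝓝 0, ψ t = 0
  · refine tendsto_const_nhds.congr' ?_
    filter_upwards [h, hunit, nhdsWithin_le_nhds hzero] with t ht ht01 ht0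
    have hlog : log t ≠ 0 := (log_neg ht01.1 ht01.2).ne
    have htn : t ^ n ≠ 0 := pow_ne_zero n ht01.1.ne'
    rw [ht0] at ht
    simpa [htn, hlog, eq_comm] using ht
  obtain ⟨N, v, hv, hv0, hψv⟩ := hψ.exists_eventuallyEq_pow_smul_nonzero_iff.mpr hzero
  have hv' : Tendsto v (𝓝[>] 0) (𝓝 (v 0)) := hv.continuousAt.tendsto.mono_left nhdsWithin_le_nhds
  have hvu : ∀ᶠ t in 𝓝[>] (0 : ℝ), t ^ N * v t = t ^ n * u t * log t := by
    filter_upwards [h, nhdsWithin_le_nhds hψv] with t ht htv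
    simpa [← ht] using htv.symm
  -- If `n ≤ N` then `u t = t ^ (N - n) * v t / log t → 0`; if `N < n` then
  -- `v t = t ^ (n - N) * log t * u t → 0`, contradicting `v 0 ≠ 0`.
  rcases le_or_gt n N with hnN | hNn
  · have hlim := (((continuous_pow (N - n)).tendsto' 0 (0 ^ (N - n)) rfl).mono_left
      nhdsWithin_le_nhds).mul hv' |>.mul hlog_inv
    rw [mul_zero] at hlim
    refine hlim.congr' ?_
    filter_upwards [hvu, hunit] with t ht ht01
    have hlog : log t ≠ 0 := (log_neg ht01.1 ht01.2).ne
    rw [← Nat.sub_add_cancel hnN, pow_add] at ht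
    have hcancel : t ^ (N - n) * v t = u t * log t :=
      mul_left_cancel₀ (pow_ne_zero n ht01.1.ne') (by linear_combination ht)
    field_simp
    linear_combination hcancel
  · refine absurd (tendsto_nhds_unique hv' ?_) hv0
    have hlim := (tendsto_pow_mul_log_nhdsGT_zero (Nat.sub_ne_zero_of_lt hNn)).mul hu'
    rw [zero_mul] at hlim
    refine hlim.congr' ?_
    filter_upwards [hvu, self_mem_nhdsWithin] with t ht ht0
    rw [← Nat.sub_add_cancel hNn.le, pow_add] at ht
    apply mul_left_cancel₀ (pow_ne_zero N ht0.ne')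
    linear_combination -ht

section Radial

variable {E : Type*} [NormedAddCommGroup E] [InnerProductSpace ℝ E] {q : ℝ → ℝ} {P A : E}

lemma hasFDerivAt_comp_norm_sub_sq {q' : ℝ} (hq : HasDerivAt q q' (‖P - A‖ ^ 2)) :
    HasFDerivAt (fun B => q (‖P - B‖ ^ 2)) ((-2 * q') • innerSL ℝ (P - A)) A := by
  have hsub : HasFDerivAt (fun B : E => P - B) (-ContinuousLinearMap.id ℝ E) A :=
    (hasFDerivAt_id A).const_sub P
  refine (hq.comp_hasFDerivAt A hsub.norm_sq).congr_fderiv ?_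
  ext v
  simp only [ContinuousLinearMap.comp_neg, ContinuousLinearMap.comp_id, smul_apply, neg_apply,
    coe_innerSL_apply, nsmul_eq_mul, smul_eq_mul]
  ring

lemma iteratedFDeriv_two_comp_norm_sub_sq {q' : ℝ → ℝ} {q'' : ℝ}
    (hq : ∀ᶠ s in 𝓝 (‖P - A‖ ^ 2), HasDerivAt q (q' s) s)
    (hq' : HasDerivAt q' q'' (‖P - A‖ ^ 2)) (v w : E) :
    iteratedFDeriv ℝ 2 (fun B => q (‖P - B‖ ^ 2)) A ![v, w] =
      4 * q'' * ⟪P - A, v⟫ * ⟪P - A, w⟫ + 2 * q' (‖P - A‖ ^ 2) * ⟪v, w⟫ := by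
  have hnear : ∀ᶠ B in 𝓝 A, HasDerivAt q (q' (‖P - B‖ ^ 2)) (‖P - B‖ ^ 2) :=
    ((continuous_const.sub continuous_id).norm.pow 2).continuousAt.eventually hq
  have hfderiv : fderiv ℝ (fun B => q (‖P - B‖ ^ 2)) =ᶠ[𝓝 A]
      fun B => (-2 * q' (‖P - B‖ ^ 2)) • innerSL ℝ (P - B) :=
    hnear.mono fun B hB => (hasFDerivAt_comp_norm_sub_sq hB).fderiv
  have hcoef := (hasFDerivAt_comp_norm_sub_sq hq').const_mul (-2)
  have hinner := (innerSL ℝ (E := E)).hasFDerivAt.comp A ((hasFDerivAt_id A).const_sub P)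
  have hF : HasFDerivAt (fun B => (-2 * q' (‖P - B‖ ^ 2)) • innerSL ℝ (P - B)) _ A :=
    hcoef.smul hinner
  rw [iteratedFDeriv_two_apply, hfderiv.fderiv_eq, hF.fderiv]
  simp only [ContinuousLinearMap.comp_neg, ContinuousLinearMap.comp_id, Matrix.cons_val_zero,
    Matrix.cons_val_one, Matrix.cons_val_fin_one, add_apply, smul_apply, neg_apply,
    ContinuousLinearMap.smulRight_apply, coe_innerSL_apply, smul_eq_mul]
  rw [innerSL_apply_apply]
  ring

end Radial

section EllipticOp

variable {d : ℕ} (c : Fin d → Fin d → ℝ) (b : Fin d → ℝ) (ρ : ℝ)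

noncomputable def ellipticOp (f : EuclideanSpace ℝ (Fin d) → ℝ) (A : EuclideanSpace ℝ (Fin d)) :
    ℝ :=
  (∑ i, ∑ j, c i j *
      iteratedFDeriv ℝ 2 f A ![EuclideanSpace.single i 1, EuclideanSpace.single j 1]) +
    (∑ j, b j * fderiv ℝ f A (EuclideanSpace.single j 1)) + ρ * f A

lemma ellipticOp_comp_norm_sub_sq {q q' : ℝ → ℝ} {q'' : ℝ} {P A : EuclideanSpace ℝ (Fin d)}
    (hq : ∀ᶠ s in 𝓝 (‖P - A‖ ^ 2), HasDerivAt q (q' s) s)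
    (hq' : HasDerivAt q' q'' (‖P - A‖ ^ 2)) :
    ellipticOp c b ρ (fun B => q (‖P - B‖ ^ 2)) A =
      4 * q'' * (∑ i, ∑ j, c i j * (P - A) i * (P - A) j) +
        2 * q' (‖P - A‖ ^ 2) * (∑ i, c i i) - 2 * q' (‖P - A‖ ^ 2) * (∑ j, b j * (P - A) j) +
        ρ * q (‖P - A‖ ^ 2) := by
  set x := P - A
  have hQ : ∑ i, ∑ j, c i j * (4 * q'' * x i * x j) = 4 * q'' * ∑ i, ∑ j, c i j * x i * x j := by
    simp only [Finset.mul_sum]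
    exact Finset.sum_congr rfl fun i _ => Finset.sum_congr rfl fun j _ => by ring
  have htr : ∑ i, c i i * (2 * q' (‖x‖ ^ 2)) = 2 * q' (‖x‖ ^ 2) * ∑ i, c i i := by
    rw [Finset.mul_sum]
    exact Finset.sum_congr rfl fun i _ => by ring
  have hb : ∑ j, b j * (-2 * q' (‖x‖ ^ 2) * x j) = -(2 * q' (‖x‖ ^ 2) * ∑ j, b j * x j) := by
    rw [Finset.mul_sum, ← Finset.sum_neg_distrib]
    exact Finset.sum_congr rfl fun j _ => by ring
  simp only [ellipticOp, iteratedFDeriv_two_comp_norm_sub_sq hq hq',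
    (hasFDerivAt_comp_norm_sub_sq hq.self_of_nhds).fderiv, smul_apply, coe_innerSL_apply,
    smul_eq_mul, EuclideanSpace.inner_single_right, PiLp.single_apply, one_mul, conj_trivial,
    mul_add, Finset.sum_add_distrib, mul_ite, mul_one, mul_zero, Finset.sum_ite_eq',
    Finset.mem_univ, if_true]
  rw [hQ, htr, hb]
  ring

end EllipticOp

noncomputable def tpsProfile (n : ℕ) (s : ℝ) : ℝ := s ^ (n + 2) * log s / 2

noncomputable def tpsProfileDeriv (n : ℕ) (s : ℝ) : ℝ := ((n + 2) * log s + 1) * s ^ (n + 1) / 2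

lemma norm_pow_mul_log_eq_tpsProfile {E : Type*} [NormedAddCommGroup E] (n : ℕ) (x : E) :
    ‖x‖ ^ (2 * n + 4) * log ‖x‖ = tpsProfile n (‖x‖ ^ 2) := by
  rw [tpsProfile, log_pow, ← pow_mul]
  push_cast
  ring_nf

lemma hasDerivAt_tpsProfile (n : ℕ) {s : ℝ} (hs : s ≠ 0) :
    HasDerivAt (tpsProfile n) (tpsProfileDeriv n s) s := by
  have h := ((hasDerivAt_pow (n + 2) s).mul (hasDerivAt_log hs)).div_const 2
  refine h.congr_deriv ?_
  rw [tpsProfileDeriv, show n + 2 - 1 = n + 1 by omega]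
  field_simp
  push_cast
  ring

lemma hasDerivAt_tpsProfileDeriv (n : ℕ) {s : ℝ} (hs : s ≠ 0) :
    HasDerivAt (tpsProfileDeriv n)
      (((n + 2) * (n + 1) * log s + (2 * n + 3)) * s ^ n / 2) s := by
  have h := ((((hasDerivAt_log hs).const_mul ((n : ℝ) + 2)).add_const 1).mul
    (hasDerivAt_pow (n + 1) s)).div_const 2
  refine h.congr_deriv ?_
  rw [show n + 1 - 1 = n by omega]
  field_simp
  push_cast
  ring

lemma ellipticOp_tps_sub_smul {d : ℕ} (c : Fin d → Fin d → ℝ) (b : Fin d → ℝ) (ρ : ℝ) (n : ℕ)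
    (P : EuclideanSpace ℝ (Fin d)) {ξ : EuclideanSpace ℝ (Fin d)} (hξ : ‖ξ‖ = 1) {t : ℝ}
    (ht : 0 < t) :
    ellipticOp c b ρ (fun B => ‖P - B‖ ^ (2 * n + 4) * log ‖P - B‖) (P - t • ξ) =
      t ^ (2 * n + 2) * (2 * (2 * n + 3) * ∑ i, ∑ j, c i j * ξ i * ξ j + ∑ i, c i i -
          t * ∑ j, b j * ξ j) +
        t ^ (2 * n + 2) * (2 * (n + 2) * (2 * (n + 1) * ∑ i, ∑ j, c i j * ξ i * ξ j +
          ∑ i, c i i - t * ∑ j, b j * ξ j) + ρ * t ^ 2) * log t := by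
  have hnorm : ‖P - (P - t • ξ)‖ ^ 2 = t ^ 2 := by
    rw [sub_sub_cancel, norm_smul, hξ, mul_one, Real.norm_of_nonneg ht.le]
  have hs : t ^ 2 ≠ 0 := by positivity
  simp only [norm_pow_mul_log_eq_tpsProfile]
  rw [ellipticOp_comp_norm_sub_sq c b ρ
    (hnorm ▸ (eventually_ne_nhds hs).mono fun s hs => hasDerivAt_tpsProfile n hs)
    (hnorm ▸ hasDerivAt_tpsProfileDeriv n hs)]
  have hQ : ∑ i, ∑ j, c i j * (t • ξ) i * (t • ξ) j = t ^ 2 * ∑ i, ∑ j, c i j * ξ i * ξ j := by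
    simp only [Finset.mul_sum, PiLp.smul_apply, smul_eq_mul]
    exact Finset.sum_congr rfl fun i _ => Finset.sum_congr rfl fun j _ => by ring
  have hb : ∑ j, b j * (t • ξ) j = t * ∑ j, b j * ξ j := by
    simp only [Finset.mul_sum, PiLp.smul_apply, smul_eq_mul]
    exact Finset.sum_congr rfl fun j _ => by ring
  rw [sub_sub_cancel] at hnorm ⊢
  rw [hQ, hb, hnorm, tpsProfile, tpsProfileDeriv, log_pow]
  push_cast
  ring

lemma quadForm_add_trace_eq_zero_of_analyticAt {d : ℕ} {c : Fin d → Fin d → ℝ} {b : Fin d → ℝ}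
    {ρ : ℝ} {n : ℕ} {P : EuclideanSpace ℝ (Fin d)}
    (hg : AnalyticAt ℝ (fun A => if A = P then (0 : ℝ) else
      ellipticOp c b ρ (fun B => ‖P - B‖ ^ (2 * n + 4) * log ‖P - B‖) A) P)
    {ξ : EuclideanSpace ℝ (Fin d)} (hξ : ‖ξ‖ = 1) :
    2 * (n + 1) * ∑ i, ∑ j, c i j * ξ i * ξ j + ∑ i, c i i = 0 := by
  set Q := ∑ i, ∑ j, c i j * ξ i * ξ j
  set bξ := ∑ j, b j * ξ j
  have hline : AnalyticAt ℝ (fun t : ℝ => P - t • ξ) 0 := by fun_prop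
  have hψ := hg.comp_of_eq hline (by simp)
  have hp : AnalyticAt ℝ
      (fun t : ℝ => t ^ (2 * n + 2) * (2 * (2 * n + 3) * Q + ∑ i, c i i - t * bξ)) 0 := by
    fun_prop
  have hu : ContinuousAt
      (fun t : ℝ => 2 * (n + 2) * (2 * (n + 1) * Q + ∑ i, c i i - t * bξ) + ρ * t ^ 2) 0 := by
    fun_prop
  have h0 := eq_zero_of_analyticAt_of_eventually_eq_pow_mul_log (n := 2 * n + 2) (hψ.sub hp) hu ?_
  · have : (0 : ℝ) < 2 * (n + 2) := by positivity
    simp only [zero_mul, sub_zero, mul_zero, zero_pow two_ne_zero, add_zero] at h0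
    exact (mul_eq_zero.mp h0).resolve_left this.ne'
  · filter_upwards [self_mem_nhdsWithin] with t (ht : 0 < t)
    have hne : P - t • ξ ≠ P := by
      rw [Ne, sub_eq_self, smul_eq_zero, not_or]
      exact ⟨ht.ne', ne_zero_of_norm_ne_zero (hξ ▸ one_ne_zero)⟩
    simp only [Function.comp_apply, Pi.sub_apply, if_neg hne,
      ellipticOp_tps_sub_smul c b ρ n P hξ ht]
    ring

open Classical in
/-- Let `d ≥ 2`, let constants `c_{ij}` satisfy the ellipticity condition,
`b ∈ ℝ^d`, `ρ ∈ ℝ`, `P ∈ ℝ^d`, and `k` even with `k ≥ 4`. The function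
`g(A) = Σ c_{ij} ∂²_{a_i a_j}[‖P−A‖^k log‖P−A‖] + Σ b_j ∂_{a_j}[‖P−A‖^k log‖P−A‖]
+ ρ‖P−A‖^k log‖P−A‖` for `A ≠ P` (derivatives in the center variable `A`, second
partials realized as the second iterated Fréchet derivative on standard basis vectors),
with `g(P) = 0`, is not analytic at `P`. -/
theorem elliptic_op_tps_not_analyticAt (d k : ℕ) (hd : 2 ≤ d)
    (hk : Even k) (hk4 : 4 ≤ k)
    (c : Fin d → Fin d → ℝ) (b : Fin d → ℝ) (ρ : ℝ)
    (hell : ∀ ξ : Fin d → ℝ, ξ ≠ 0 → (∑ i, ∑ j, c i j * ξ i * ξ j) ≠ 0)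
    (P : EuclideanSpace ℝ (Fin d)) :
    ¬ AnalyticAt ℝ
      (fun A : EuclideanSpace ℝ (Fin d) =>
        if A = P then (0 : ℝ)
        else
          (∑ i, ∑ j, c i j *
              iteratedFDeriv ℝ 2
                (fun B : EuclideanSpace ℝ (Fin d) => ‖P - B‖ ^ k * Real.log ‖P - B‖) A
                ![EuclideanSpace.single i 1, EuclideanSpace.single j 1]) +
            (∑ j, b j *
              fderiv ℝ
                (fun B : EuclideanSpace ℝ (Fin d) => ‖P - B‖ ^ k * Real.log ‖P - B‖) A
                (EuclideanSpace.single j 1)) +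
            ρ * (‖P - A‖ ^ k * Real.log ‖P - A‖)) P := by
  obtain ⟨n, rfl⟩ : ∃ n, k = 2 * n + 4 := by
    obtain ⟨m, rfl⟩ := hk
    exact ⟨m - 2, by omega⟩
  intro hg
  have hdiag (l : Fin d) : 2 * (n + 1) * c l l + ∑ i, c i i = 0 := by
    simpa [PiLp.single_apply] using
      quadForm_add_trace_eq_zero_of_analyticAt hg (ξ := EuclideanSpace.single l 1) (by simp)
  have htrace : ∑ i, c i i = 0 := by
    have hsum := Finset.sum_eq_zero fun l (_ : l ∈ Finset.univ) => hdiag l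
    rw [Finset.sum_add_distrib, ← Finset.mul_sum, Finset.sum_const, Finset.card_univ,
      Fintype.card_fin, nsmul_eq_mul] at hsum
    have hmul : (2 * (n + 1) + d : ℝ) * ∑ i, c i i = 0 := by linear_combination hsum
    exact (mul_eq_zero.mp hmul).resolve_left (by positivity)
  let l : Fin d := ⟨0, by omega⟩
  refine hell (Pi.single l 1) (by simp) ?_
  simpa [Pi.single_apply, htrace, Nat.cast_add_one_ne_zero] using hdiag l
end
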